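/- Let 0 < α < 1, L > 0, T > 0, and let f : ℝ → ℝ be a T-periodic continuously differentiable function. Then the reduced fractional derivative with sliding fixed memory length, ᴱD_L^α f(t) = (L^{1-α}/((1-α)Γ(1-α))) ∫_0^1 f'(t - L·y^{1/(1-α)}) dy, is itself a T-periodic function of t. -/
import Mathlib


open Real intervalIntegral

theorem stmt_2 (α L T : ℝ) (hα : 0 < α) (hα1 : α < 1) (hL : 0 < L) (hT : 0 < T)
    (f : ℝ → ℝ) (hf : ContDiff ℝ 1 f) (hper : ∀ t, f (t + T) = f t) :
    ∀ t : ℝ,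
      (L ^ (1 - α) / ((1 - α) * Real.Gamma (1 - α))) *
          ∫ y in (0:ℝ)..1, deriv f ((t + T) - L * y ^ (1 / (1 - α))) =
        (L ^ (1 - α) / ((1 - α) * Real.Gamma (1 - α))) *
          ∫ y in (0:ℝ)..1, deriv f (t - L * y ^ (1 / (1 - α))) := by
  have hd : ∀ x : ℝ, deriv f (x + T) = deriv f x := by
    intro x
    have : (fun y => f (y + T)) = f := funext hper
    calc deriv f (x + T) = deriv (fun y => f (y + T)) x := (deriv_comp_add_const f T x).symm
      _ = deriv f x := by rw [this]
  intro t
  congr 1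
  apply intervalIntegral.integral_congr
  intro y _
  have : (t + T) - L * y ^ (1 / (1 - α)) = (t - L * y ^ (1 / (1 - α))) + T := by ring
  simp only
  rw [this, hd]
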